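/- arXiv:1611.00665 — 2 statements merged into one kernel-verified Lean document; each statement's English description precedes it below -/
import Mathlib

section
/- For any non-negative submodular function f on subsets of [n] and any x ∈ [0,1]^n, the concave closure satisfies f⁺(x) ≤ 4·f*_{1/2}(x), where f*_{1/2}(x) = min_{S ⊆ [n]} E_{T ∼ 1_S/2}[f(T) + ∑_{i ∉ S} (f(T ∪ {i}) − f(T))·x_i]. -/
open Finset

def Submodular {n : ℕ} (f : Finset (Fin n) → ℝ) : Prop :=
  ∀ S T : Finset (Fin n), f (S ∪ T) + f (S ∩ T) ≤ f S + f T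

/-- f*_{1/2}(x) = min over S of E_{T ~ 1_S/2}[ f(T) + ∑_{i ∉ S} (f(T ∪ {i}) − f(T)) x_i ]. -/
noncomputable def fstarHalf {n : ℕ} (f : Finset (Fin n) → ℝ) (x : Fin n → ℝ) : ℝ :=
  (Finset.univ : Finset (Finset (Fin n))).inf' ⟨∅, Finset.mem_univ _⟩
    (fun S => ∑ T ∈ S.powerset, (1 / 2 ^ S.card : ℝ) *
      (f T + ∑ i ∈ Sᶜ, (f (insert i T) - f T) * x i))

/-!
For fixed `S`, write `T` for a uniformly random subset of `S`. Submodularity makes the sum of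
the marginals `f_T(i)` over `i ∈ R \ S` dominate `f (T ∪ R \ S) - f T`, so averaging over
`R ∼ α` shows that the bracket in `f*_{1/2}` dominates `E_R f (T ∪ R \ S)`. It then suffices that
`f C ≤ 4 E_T f T` for every nonnegative submodular `f` and `C ⊆ S` (applied to
`T ↦ f (T ∪ R \ S)` and `C = R ∩ S`). This follows from two halving steps,
`f C ≤ 2 E_T f (T ∩ C)` and `E_T f (T ∩ C) ≤ 2 E_T f T`, each obtained by pairing `T` with its
image under the measure-preserving involution `T ↦ T ∆ A` of the powerset of `S`.
-/

open scoped symmDiff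

theorem Finset.sum_powerset_symmDiff {α β : Type*} [DecidableEq α] [AddCommMonoid β]
    {S A : Finset α} (hA : A ⊆ S) (g : Finset α → β) :
    ∑ T ∈ S.powerset, g (T ∆ A) = ∑ T ∈ S.powerset, g T := by
  refine sum_nbij' (· ∆ A) (· ∆ A) (fun T hT => ?_) (fun T hT => ?_)
    (fun T _ => symmDiff_symmDiff_cancel_right A T) (fun T _ => symmDiff_symmDiff_cancel_right A T)
    (fun T _ => rfl)
  all_goals
    rw [mem_powerset] at hT ⊢
    exact symmDiff_le_sup.trans (union_subset hT hA)

namespace Submodular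

variable {n : ℕ} {f : Finset (Fin n) → ℝ}

theorem apply_insert_sub_le (hf : Submodular f) {T U : Finset (Fin n)} (hTU : T ⊆ U)
    {a : Fin n} (ha : a ∉ U) : f (insert a U) - f U ≤ f (insert a T) - f T := by
  have h := hf (insert a T) U
  have hunion : insert a T ∪ U = insert a U := by ext; simp; grind
  have hinter : insert a T ∩ U = T := by ext; simp; grind
  rw [hunion, hinter] at h
  linarith

theorem apply_union_sub_le_sum (hf : Submodular f) (T A : Finset (Fin n)) :
    f (T ∪ A) - f T ≤ ∑ i ∈ A, (f (insert i T) - f T) := by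
  induction A using Finset.induction_on with
  | empty => simp
  | @insert a A ha ih =>
    rw [Finset.sum_insert ha, Finset.union_insert]
    by_cases haT : a ∈ T
    · rw [insert_eq_of_mem (mem_union_left A haT), insert_eq_of_mem haT]
      linarith
    · have := hf.apply_insert_sub_le (U := T ∪ A) subset_union_left (a := a) (by simp [haT, ha])
      linarith

theorem comp_union_right (hf : Submodular f) (D : Finset (Fin n)) :
    Submodular fun T => f (T ∪ D) := by
  intro A B
  have h := hf (A ∪ D) (B ∪ D)
  rwa [← union_union_distrib_right, ← inter_union_distrib_right] at h

theorem apply_union_le_add (hf : Submodular f) (hnonneg : ∀ S, 0 ≤ f S)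
    (A B : Finset (Fin n)) : f (A ∪ B) ≤ f A + f B := by
  linarith [hf A B, hnonneg (A ∩ B)]

theorem apply_inter_le_add (hf : Submodular f) (hnonneg : ∀ S, 0 ≤ f S)
    (A B : Finset (Fin n)) : f (A ∩ B) ≤ f A + f B := by
  linarith [hf A B, hnonneg (A ∪ B)]

theorem two_pow_card_mul_le_two_mul_sum_inter (hf : Submodular f) (hnonneg : ∀ S, 0 ≤ f S)
    {S C : Finset (Fin n)} (hC : C ⊆ S) :
    2 ^ S.card * f C ≤ 2 * ∑ T ∈ S.powerset, f (T ∩ C) := by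
  have hsplit (T : Finset (Fin n)) : f C ≤ f (T ∩ C) + f (T ∆ C ∩ C) := by
    have hcover : T ∩ C ∪ T ∆ C ∩ C = C := by ext; simp [mem_symmDiff]; tauto
    simpa [hcover] using hf.apply_union_le_add hnonneg (T ∩ C) (T ∆ C ∩ C)
  calc 2 ^ S.card * f C = ∑ T ∈ S.powerset, f C := by simp [card_powerset]
    _ ≤ ∑ T ∈ S.powerset, (f (T ∩ C) + f (T ∆ C ∩ C)) := sum_le_sum fun T _ => hsplit T
    _ = 2 * ∑ T ∈ S.powerset, f (T ∩ C) := by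
      rw [sum_add_distrib, sum_powerset_symmDiff hC (fun T => f (T ∩ C))]
      ring

theorem sum_inter_le_two_mul_sum (hf : Submodular f) (hnonneg : ∀ S, 0 ≤ f S)
    (S C : Finset (Fin n)) :
    ∑ T ∈ S.powerset, f (T ∩ C) ≤ 2 * ∑ T ∈ S.powerset, f T := by
  have hsplit : ∀ T ∈ S.powerset, f (T ∩ C) ≤ f T + f (T ∆ (S \ C)) := fun T hT => by
    have hTC : T ∩ T ∆ (S \ C) = T ∩ C := by
      rw [mem_powerset] at hT
      ext i
      have := @hT i
      simp [mem_symmDiff]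
      tauto
    simpa [hTC] using hf.apply_inter_le_add hnonneg T (T ∆ (S \ C))
  calc ∑ T ∈ S.powerset, f (T ∩ C) ≤ ∑ T ∈ S.powerset, (f T + f (T ∆ (S \ C))) :=
        sum_le_sum hsplit
    _ = 2 * ∑ T ∈ S.powerset, f T := by
      rw [sum_add_distrib, sum_powerset_symmDiff sdiff_subset f]
      ring

theorem two_pow_card_mul_le_four_mul_sum (hf : Submodular f) (hnonneg : ∀ S, 0 ≤ f S)
    {S C : Finset (Fin n)} (hC : C ⊆ S) :
    2 ^ S.card * f C ≤ 4 * ∑ T ∈ S.powerset, f T := by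
  linarith [hf.two_pow_card_mul_le_two_mul_sum_inter hnonneg hC,
    hf.sum_inter_le_two_mul_sum hnonneg S C]

end Submodular

theorem sum_mul_sum_sdiff_eq_sum_compl_mul {ι : Type*} [Fintype ι] [DecidableEq ι] {α : Finset ι → ℝ}
    {x : ι → ℝ} (hmarg : ∀ i, ∑ S ∈ univ.filter (fun S => i ∈ S), α S = x i)
    (S : Finset ι) (w : ι → ℝ) :
    ∑ R, α R * ∑ i ∈ R \ S, w i = ∑ i ∈ Sᶜ, w i * x i := by
  calc ∑ R, α R * ∑ i ∈ R \ S, w i = ∑ R, ∑ i ∈ Sᶜ, if i ∈ R then w i * α R else 0 := by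
        refine sum_congr rfl fun R _ => ?_
        rw [← sum_filter, mul_sum]
        have hRS : Sᶜ.filter (· ∈ R) = R \ S := by ext; simp; tauto
        simp only [hRS, mul_comm]
    _ = ∑ i ∈ Sᶜ, w i * x i := by
        rw [sum_comm]
        refine sum_congr rfl fun i _ => ?_
        rw [← hmarg, mul_sum, sum_filter]

theorem Submodular.sum_mul_apply_union_sdiff_le {n : ℕ} {f : Finset (Fin n) → ℝ}
    (hf : Submodular f) {α : Finset (Fin n) → ℝ} {x : Fin n → ℝ} (hα : ∀ S, 0 ≤ α S)
    (hα1 : ∑ S : Finset (Fin n), α S = 1)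
    (hmarg : ∀ i, ∑ S ∈ univ.filter (fun S => i ∈ S), α S = x i) (S T : Finset (Fin n)) :
    ∑ R, α R * f (T ∪ R \ S) ≤ f T + ∑ i ∈ Sᶜ, (f (insert i T) - f T) * x i := by
  rw [← sum_mul_sum_sdiff_eq_sum_compl_mul hmarg]
  calc ∑ R, α R * f (T ∪ R \ S)
      ≤ ∑ R, α R * (f T + ∑ i ∈ R \ S, (f (insert i T) - f T)) :=
        sum_le_sum fun R _ => mul_le_mul_of_nonneg_left
          (by linarith [hf.apply_union_sub_le_sum T (R \ S)]) (hα R)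
    _ = f T + ∑ R, α R * ∑ i ∈ R \ S, (f (insert i T) - f T) := by
        simp_rw [mul_add, sum_add_distrib, ← sum_mul, hα1, one_mul]

/-- The function whose minimum over `univ` is, definitionally, `fstarHalf f x`. -/
noncomputable def fstarHalfAt {n : ℕ} (f : Finset (Fin n) → ℝ) (x : Fin n → ℝ)
    (S : Finset (Fin n)) : ℝ :=
  ∑ T ∈ S.powerset, (1 / 2 ^ S.card : ℝ) * (f T + ∑ i ∈ Sᶜ, (f (insert i T) - f T) * x i)

theorem Submodular.sum_mul_le_four_mul_fstarHalfAt {n : ℕ} {f : Finset (Fin n) → ℝ}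
    (hf : Submodular f) (hnonneg : ∀ S, 0 ≤ f S) {α : Finset (Fin n) → ℝ} {x : Fin n → ℝ}
    (hα : ∀ S, 0 ≤ α S) (hα1 : ∑ S : Finset (Fin n), α S = 1)
    (hmarg : ∀ i, ∑ S ∈ univ.filter (fun S => i ∈ S), α S = x i) (S : Finset (Fin n)) :
    ∑ R, α R * f R ≤ 4 * fstarHalfAt f x S := by
  have hR (R : Finset (Fin n)) : 2 ^ S.card * f R ≤ 4 * ∑ T ∈ S.powerset, f (T ∪ R \ S) := by
    have h := (hf.comp_union_right (R \ S)).two_pow_card_mul_le_four_mul_sum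
      (fun _ => hnonneg _) (inter_subset_right : R ∩ S ⊆ S)
    rwa [show R ∩ S ∪ R \ S = R from sup_inf_sdiff R S] at h
  have hpos : (0 : ℝ) < 2 ^ S.card := by positivity
  refine le_of_mul_le_mul_left ?_ hpos
  calc 2 ^ S.card * ∑ R, α R * f R = ∑ R, α R * (2 ^ S.card * f R) := by
        simp_rw [mul_sum, mul_left_comm]
    _ ≤ ∑ R, α R * (4 * ∑ T ∈ S.powerset, f (T ∪ R \ S)) :=
        sum_le_sum fun R _ => mul_le_mul_of_nonneg_left (hR R) (hα R)
    _ = 4 * ∑ T ∈ S.powerset, ∑ R, α R * f (T ∪ R \ S) := by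
        simp_rw [mul_sum, mul_left_comm]
        exact sum_comm
    _ ≤ 4 * ∑ T ∈ S.powerset, (f T + ∑ i ∈ Sᶜ, (f (insert i T) - f T) * x i) := by
        gcongr with T
        exact hf.sum_mul_apply_union_sdiff_le hα hα1 hmarg S T
    _ = 2 ^ S.card * (4 * fstarHalfAt f x S) := by
        rw [fstarHalfAt, ← mul_sum]
        field_simp

theorem stmt_10_general {n : ℕ} (f : Finset (Fin n) → ℝ) (hf : Submodular f)
    (hnonneg : ∀ S, 0 ≤ f S) (x : Fin n → ℝ)
    (α : Finset (Fin n) → ℝ) (hα : ∀ S, 0 ≤ α S)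
    (hα1 : ∑ S : Finset (Fin n), α S = 1)
    (hmarg : ∀ i, ∑ S ∈ Finset.univ.filter (fun S => i ∈ S), α S = x i) :
    ∑ S : Finset (Fin n), α S * f S ≤ 4 * fstarHalf f x := by
  have h : (∑ S, α S * f S) / 4 ≤ fstarHalf f x := le_inf' _ _ fun S _ =>
    (div_le_iff₀' four_pos).2 (hf.sum_mul_le_four_mul_fstarHalfAt hnonneg hα hα1 hmarg S)
  linarith

theorem stmt_10 {n : ℕ} (f : Finset (Fin n) → ℝ) (hf : Submodular f)
    (hnonneg : ∀ S, 0 ≤ f S) (x : Fin n → ℝ) (hx : ∀ i, 0 ≤ x i ∧ x i ≤ 1)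
    (α : Finset (Fin n) → ℝ) (hα : ∀ S, 0 ≤ α S)
    (hα1 : ∑ S : Finset (Fin n), α S = 1)
    (hmarg : ∀ i, ∑ S ∈ Finset.univ.filter (fun S => i ∈ S), α S = x i) :
    ∑ S : Finset (Fin n), α S * f S ≤ 4 * fstarHalf f x :=
  stmt_10_general f hf hnonneg x α hα hα1 hmarg
end

section
/- For any non-negative submodular function f on subsets of [n], any x ∈ [0,1]^n, and any distribution α over subsets with ∑_S α_S = 1 and ∑_S α_S 1_S = x, we have ∑_S α_S f(S) ≤ 200·F_max(x), where F_max is the multilinear extension of f_max(S) = max_{T ⊆ S} f(T). That is, the correlation gap of any non-negative submodular function is at most 200. -/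
open Finset

noncomputable def multilinear {n : ℕ} (f : Finset (Fin n) → ℝ) (x : Fin n → ℝ) : ℝ :=
  ∑ S : Finset (Fin n), (∏ i ∈ S, x i) * (∏ i ∈ Sᶜ, (1 - x i)) * f S

noncomputable def fmax {n : ℕ} (f : Finset (Fin n) → ℝ) (S : Finset (Fin n)) : ℝ :=
  S.powerset.sup' ⟨∅, by simp⟩ f

/-!
Let `R` sample each `i` independently with probability `x i`, and let `L = {i | x i ≤ 1/2}`.
Pairing `R ∌ i` with `insert i R` turns an expected marginal gain `E[f (R + i) - f R]` into
an expected loss `E[f R - f (R - i)]` at the cost of a factor `(1 - x i) / x i`, and by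
submodularity the positive parts of the losses over `i ∈ R` sum to at most `f R`.
For `A` outside `L` this gives `f A ≤ 2 E f (R ∩ A) ≤ 2 F_max(x)`; dually, for `A ⊆ L`,
`f A ≤ 2 E φ (A ∪ R)` with `φ T = f (T ∩ L)`, and `φ (A ∪ R) ≤ φ R + ∑_{i ∈ A} (φ (R + i) - φ R)`.
Since `f S ≤ f (S \ L) + f (S ∩ L)`, averaging over `S ∼ α` replaces `∑_{i ∈ S}` by `∑_i x i`,
and `∑_i x i E[φ (R + i) - φ R] ≤ E φ R`, so `E_α f ≤ 2 F_max(x) + 4 E φ R ≤ 6 F_max(x)`.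
-/

namespace Submodular

variable {n : ℕ} {f : Finset (Fin n) → ℝ}

theorem comp_inter (hf : Submodular f) (U : Finset (Fin n)) :
    Submodular (fun T => f (T ∩ U)) := by
  intro S T
  have hunion : (S ∪ T) ∩ U = S ∩ U ∪ T ∩ U := union_inter_distrib_right S T U
  have hinter : (S ∩ T) ∩ U = S ∩ U ∩ (T ∩ U) := inter_inter_distrib_right S T U
  simpa only [hunion, hinter] using hf (S ∩ U) (T ∩ U)

theorem comp_sdiff (hf : Submodular f) (U : Finset (Fin n)) :
    Submodular (fun T => f (U \ T)) := by
  intro S T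
  simp only [sdiff_union_distrib, sdiff_inter_distrib_right]
  linarith [hf (U \ S) (U \ T)]

theorem le_add (hf : Submodular f) (hf0 : ∀ S, 0 ≤ f S) (A B : Finset (Fin n)) :
    f (A ∪ B) ≤ f A + f B := by
  linarith [hf A B, hf0 (A ∩ B)]

theorem insert_sub_le_insert_sub (hf : Submodular f) {S T : Finset (Fin n)} (hST : S ⊆ T)
    {i : Fin n} (hi : i ∉ T) : f (insert i T) - f T ≤ f (insert i S) - f S := by
  have hunion : insert i S ∪ T = insert i T := by
    rw [insert_union, union_eq_right.2 hST]
  have hinter : insert i S ∩ T = S := by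
    rw [insert_inter_of_notMem hi, inter_eq_left.2 hST]
  linarith [hunion ▸ hinter ▸ hf (insert i S) T]

theorem sub_erase_le_sub_erase (hf : Submodular f) {S T : Finset (Fin n)} (hST : S ⊆ T)
    {i : Fin n} (hi : i ∈ S) : f T - f (T.erase i) ≤ f S - f (S.erase i) := by
  have hunion : S ∪ T.erase i = T := by
    ext j; by_cases hj : j = i <;> aesop
  have hinter : S ∩ T.erase i = S.erase i := by
    rw [inter_erase, inter_eq_left.2 hST]
  linarith [hunion ▸ hinter ▸ hf S (T.erase i)]

theorem le_add_sum_insert_sub (hf : Submodular f) (R A : Finset (Fin n)) :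
    f (R ∪ A) ≤ f R + ∑ i ∈ A, (f (insert i R) - f R) := by
  induction A using Finset.induction_on with
  | empty => simp
  | insert a A ha ih =>
    have hstep : f (insert a (R ∪ A)) - f (R ∪ A) ≤ f (insert a R) - f R := by
      by_cases haR : a ∈ R
      · simp [insert_eq_of_mem haR, insert_eq_of_mem (mem_union_left A haR)]
      · exact hf.insert_sub_le_insert_sub subset_union_left (by simp [haR, ha])
    rw [union_insert, sum_insert ha]
    linarith

theorem sum_sub_erase_le (hf : Submodular f) {Q R : Finset (Fin n)} (hQR : Q ⊆ R) :
    ∑ i ∈ Q, (f R - f (R.erase i)) ≤ f R - f (R \ Q) := by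
  induction Q using Finset.induction_on with
  | empty => simp
  | insert a Q ha ih =>
    have haR : a ∈ R \ Q := mem_sdiff.2 ⟨hQR (mem_insert_self a Q), ha⟩
    have hstep := hf.sub_erase_le_sub_erase sdiff_subset haR
    rw [sum_insert ha, sdiff_insert]
    linarith [ih ((subset_insert a Q).trans hQR)]

theorem sum_posPart_sub_erase_le (hf : Submodular f) (hf0 : ∀ S, 0 ≤ f S) (R : Finset (Fin n)) :
    ∑ i, (f R - f (R.erase i))⁺ ≤ f R := by
  set P := R.filter fun i => f (R.erase i) < f R
  have hP : ∑ i, (f R - f (R.erase i))⁺ = ∑ i ∈ P, (f R - f (R.erase i)) := by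
    rw [← sum_subset (subset_univ P)]
    · exact sum_congr rfl fun i hi => posPart_eq_self.2 (by simp [P] at hi; linarith)
    · intro i _ hi
      refine posPart_eq_zero.2 ?_
      by_cases hiR : i ∈ R
      · simp [P, hiR] at hi; linarith
      · simp [erase_eq_of_notMem hiR]
  linarith [hf.sum_sub_erase_le (filter_subset (fun i => f (R.erase i) < f R) R), hf0 (R \ P)]

end Submodular

section Sampling

variable {n : ℕ}

noncomputable def sampleProb (x : Fin n → ℝ) (R : Finset (Fin n)) : ℝ :=
  (∏ i ∈ R, x i) * ∏ i ∈ Rᶜ, (1 - x i)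

theorem multilinear_eq_sum_sampleProb (g : Finset (Fin n) → ℝ) (x : Fin n → ℝ) :
    multilinear g x = ∑ R, sampleProb x R * g R :=
  rfl

theorem sum_sampleProb (x : Fin n → ℝ) : ∑ R, sampleProb x R = 1 := by
  have h := prod_add x (fun i => 1 - x i) univ
  simp only [add_sub_cancel, prod_const_one, powerset_univ] at h
  rw [h]
  exact sum_congr rfl fun R _ => by rw [sampleProb, compl_eq_univ_sdiff]

theorem sampleProb_one_sub_compl (x : Fin n → ℝ) (R : Finset (Fin n)) :
    sampleProb (fun i => 1 - x i) Rᶜ = sampleProb x R := by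
  simp only [sampleProb, compl_compl, sub_sub_cancel]
  ring

theorem multilinear_const (x : Fin n → ℝ) (c : ℝ) : multilinear (fun _ => c) x = c := by
  rw [multilinear_eq_sum_sampleProb, ← sum_mul, sum_sampleProb, one_mul]

theorem multilinear_add (g h : Finset (Fin n) → ℝ) (x : Fin n → ℝ) :
    multilinear (fun R => g R + h R) x = multilinear g x + multilinear h x := by
  simp only [multilinear_eq_sum_sampleProb, mul_add, sum_add_distrib]

theorem multilinear_sum {ι : Type*} (s : Finset ι) (g : ι → Finset (Fin n) → ℝ)
    (x : Fin n → ℝ) :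
    multilinear (fun R => ∑ j ∈ s, g j R) x = ∑ j ∈ s, multilinear (g j) x := by
  simp only [multilinear_eq_sum_sampleProb, mul_sum]
  exact sum_comm

theorem multilinear_one_sub (g : Finset (Fin n) → ℝ) (x : Fin n → ℝ) :
    multilinear g (fun i => 1 - x i) = multilinear (fun R => g Rᶜ) x := by
  simp only [multilinear_eq_sum_sampleProb]
  exact (Fintype.sum_bijective _ compl_involutive.bijective _ _
    fun R => by rw [sampleProb_one_sub_compl]).symm

variable {x : Fin n → ℝ}

theorem sampleProb_nonneg (hx : ∀ i, 0 ≤ x i ∧ x i ≤ 1) (R : Finset (Fin n)) :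
    0 ≤ sampleProb x R :=
  mul_nonneg (prod_nonneg fun i _ => (hx i).1) (prod_nonneg fun i _ => sub_nonneg.2 (hx i).2)

theorem mul_sampleProb_of_notMem {i : Fin n} {R : Finset (Fin n)} (hi : i ∉ R) :
    x i * sampleProb x R = (1 - x i) * sampleProb x (insert i R) := by
  rw [sampleProb, sampleProb, prod_insert hi, compl_insert,
    ← mul_prod_erase Rᶜ (fun j => 1 - x j) (mem_compl.2 hi)]
  ring

theorem multilinear_mono (hx : ∀ i, 0 ≤ x i ∧ x i ≤ 1) {g h : Finset (Fin n) → ℝ}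
    (hgh : ∀ R, g R ≤ h R) : multilinear g x ≤ multilinear h x :=
  sum_le_sum fun R _ => mul_le_mul_of_nonneg_left (hgh R) (sampleProb_nonneg hx R)

theorem multilinear_nonneg (hx : ∀ i, 0 ≤ x i ∧ x i ≤ 1) {g : Finset (Fin n) → ℝ}
    (hg : ∀ R, 0 ≤ g R) : 0 ≤ multilinear g x :=
  multilinear_const x 0 ▸ multilinear_mono hx hg

theorem sum_eq_sum_add_insert {M : Type*} [AddCommMonoid M] (i : Fin n)
    (h : Finset (Fin n) → M) :
    ∑ R, h R = ∑ R ∈ (univ.erase i).powerset, (h R + h (insert i R)) := by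
  rw [sum_add_distrib, ← sum_powerset_insert (notMem_erase i univ), insert_erase (mem_univ i),
    powerset_univ]

-- Pair each `R ∌ i` with `insert i R`: the terms with `i ∈ R` vanish on the left, those with
-- `i ∉ R` on the right.
theorem mul_multilinear_insert_sub (g : Finset (Fin n) → ℝ) (i : Fin n) :
    x i * multilinear (fun R => g (insert i R) - g R) x
      = (1 - x i) * multilinear (fun R => g R - g (R.erase i)) x := by
  simp only [multilinear_eq_sum_sampleProb, mul_sum]
  rw [sum_eq_sum_add_insert i, sum_eq_sum_add_insert i]
  refine sum_congr rfl fun R hR => ?_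
  have hi : i ∉ R := fun h => by simpa using mem_powerset.1 hR h
  rw [insert_idem, erase_insert hi, erase_eq_of_notMem hi, ← mul_assoc, ← mul_assoc,
    mul_sampleProb_of_notMem hi]
  ring

theorem mul_multilinear_insert_sub_le (hx : ∀ i, 0 ≤ x i ∧ x i ≤ 1)
    (g : Finset (Fin n) → ℝ) (i : Fin n) :
    x i * multilinear (fun R => g (insert i R) - g R) x
      ≤ (1 - x i) * multilinear (fun R => (g R - g (R.erase i))⁺) x := by
  rw [mul_multilinear_insert_sub]
  exact mul_le_mul_of_nonneg_left (multilinear_mono hx fun R => le_posPart _)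
    (sub_nonneg.2 (hx i).2)

end Sampling

theorem le_fmax {n : ℕ} (f : Finset (Fin n) → ℝ) {T R : Finset (Fin n)} (hTR : T ⊆ R) :
    f T ≤ fmax f R :=
  le_sup' f (mem_powerset.2 hTR)

theorem multilinear_inter_le_multilinear_fmax {n : ℕ} {x : Fin n → ℝ}
    (hx : ∀ i, 0 ≤ x i ∧ x i ≤ 1) (f : Finset (Fin n) → ℝ) (U : Finset (Fin n)) :
    multilinear (fun R => f (R ∩ U)) x ≤ multilinear (fmax f) x :=
  multilinear_mono hx fun _ => le_fmax f inter_subset_left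

namespace Submodular

variable {n : ℕ} {f : Finset (Fin n) → ℝ} {x : Fin n → ℝ}

theorem multilinear_union_le (hf : Submodular f) (hx : ∀ i, 0 ≤ x i ∧ x i ≤ 1)
    (A : Finset (Fin n)) :
    multilinear (fun R => f (R ∪ A)) x
      ≤ multilinear f x + ∑ i ∈ A, multilinear (fun R => f (insert i R) - f R) x := by
  rw [← multilinear_sum, ← multilinear_add]
  exact multilinear_mono hx fun R => hf.le_add_sum_insert_sub R A

theorem sum_multilinear_posPart_sub_erase_le (hf : Submodular f) (hf0 : ∀ S, 0 ≤ f S)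
    (hx : ∀ i, 0 ≤ x i ∧ x i ≤ 1) :
    ∑ i, multilinear (fun R => (f R - f (R.erase i))⁺) x ≤ multilinear f x := by
  rw [← multilinear_sum]
  exact multilinear_mono hx (hf.sum_posPart_sub_erase_le hf0)

theorem sum_mul_multilinear_insert_sub_le (hf : Submodular f) (hf0 : ∀ S, 0 ≤ f S)
    (hx : ∀ i, 0 ≤ x i ∧ x i ≤ 1) :
    ∑ i, x i * multilinear (fun R => f (insert i R) - f R) x ≤ multilinear f x := by
  refine le_trans (sum_le_sum fun i _ => ?_) (hf.sum_multilinear_posPart_sub_erase_le hf0 hx)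
  have hD := multilinear_nonneg hx fun R => posPart_nonneg (f R - f (R.erase i))
  nlinarith [mul_multilinear_insert_sub_le hx f i, (hx i).1]

theorem le_two_mul_multilinear_inter (hf : Submodular f) (hf0 : ∀ S, 0 ≤ f S)
    (hx : ∀ i, 0 ≤ x i ∧ x i ≤ 1) {A : Finset (Fin n)} (hA : ∀ i ∈ A, 1 / 2 ≤ x i) :
    f A ≤ 2 * multilinear (fun R => f (R ∩ A)) x := by
  set g : Finset (Fin n) → ℝ := fun R => f (R ∩ A)
  have hg := hf.comp_inter A
  have hg0 : ∀ S, 0 ≤ g S := fun S => hf0 (S ∩ A)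
  have hmarg : ∀ i ∈ A, multilinear (fun R => g (insert i R) - g R) x
      ≤ multilinear (fun R => (g R - g (R.erase i))⁺) x := by
    intro i hi
    have hD := multilinear_nonneg hx fun R => posPart_nonneg (g R - g (R.erase i))
    have hxi := hA i hi
    refine le_of_mul_le_mul_left ?_ (show 0 < x i by linarith)
    nlinarith [mul_multilinear_insert_sub_le hx g i]
  calc f A = multilinear (fun R => g (R ∪ A)) x := by
        simp only [g, union_inter_cancel_right, multilinear_const]
    _ ≤ multilinear g x + ∑ i ∈ A, multilinear (fun R => g (insert i R) - g R) x :=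
        hg.multilinear_union_le hx A
    _ ≤ multilinear g x + ∑ i, multilinear (fun R => (g R - g (R.erase i))⁺) x := by
        gcongr
        refine (sum_le_sum hmarg).trans (sum_le_sum_of_subset_of_nonneg (subset_univ A) ?_)
        exact fun i _ _ => multilinear_nonneg hx fun R => posPart_nonneg _
    _ ≤ 2 * multilinear g x := by
        linarith [hg.sum_multilinear_posPart_sub_erase_le hg0 hx]

/-- Dual of `le_two_mul_multilinear_inter`: apply it to `T ↦ f ((A ∪ C) \ T)` and the
complementary sample, which contains each element of `C` with probability `≥ 1/2`. -/
theorem le_two_mul_multilinear_union_inter (hf : Submodular f) (hf0 : ∀ S, 0 ≤ f S)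
    (hx : ∀ i, 0 ≤ x i ∧ x i ≤ 1) (A : Finset (Fin n)) {C : Finset (Fin n)}
    (hC : ∀ i ∈ C, x i ≤ 1 / 2) :
    f A ≤ 2 * multilinear (fun R => f (A ∪ R ∩ C)) x := by
  have hy : ∀ i, 0 ≤ 1 - x i ∧ 1 - x i ≤ 1 := fun i =>
    ⟨by linarith [(hx i).2], by linarith [(hx i).1]⟩
  have hB : ∀ i ∈ C \ A, 1 / 2 ≤ 1 - x i := fun i hi => by linarith [hC i (mem_sdiff.1 hi).1]
  have key := (hf.comp_sdiff (A ∪ C)).le_two_mul_multilinear_inter (fun _ => hf0 _) hy hB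
  rw [multilinear_one_sub] at key
  have hA : (A ∪ C) \ (C \ A) = A := by ext; simp only [mem_sdiff, mem_union]; tauto
  have hR : ∀ R : Finset (Fin n), (A ∪ C) \ (Rᶜ ∩ (C \ A)) = A ∪ R ∩ C := fun R => by
    ext; simp only [mem_sdiff, mem_union, mem_inter, mem_compl]; tauto
  simpa only [hA, hR] using key

theorem le_two_mul_multilinear_fmax_add (hf : Submodular f) (hf0 : ∀ S, 0 ≤ f S)
    (hx : ∀ i, 0 ≤ x i ∧ x i ≤ 1)
    {L : Finset (Fin n)} (hlow : ∀ i ∈ L, x i ≤ 1 / 2) (hhigh : ∀ i ∉ L, 1 / 2 ≤ x i)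
    (S : Finset (Fin n)) :
    f S ≤ 2 * multilinear (fmax f) x + 2 * (multilinear (fun R => f (R ∩ L)) x
      + ∑ i ∈ S, multilinear (fun R => f (insert i R ∩ L) - f (R ∩ L)) x) := by
  have hhigh_part : f (S \ L) ≤ 2 * multilinear (fmax f) x := by
    have := hf.le_two_mul_multilinear_inter hf0 hx (A := S \ L)
      fun i hi => hhigh i (mem_sdiff.1 hi).2
    linarith [multilinear_inter_le_multilinear_fmax hx f (S \ L)]
  have hlow_part : f (S ∩ L) ≤ 2 * (multilinear (fun R => f (R ∩ L)) x
      + ∑ i ∈ S, multilinear (fun R => f (insert i R ∩ L) - f (R ∩ L)) x) := by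
    have hunion : ∀ R : Finset (Fin n), S ∩ L ∪ R ∩ L = (R ∪ S) ∩ L := fun R => by
      rw [union_inter_distrib_right, union_comm]
    have := hf.le_two_mul_multilinear_union_inter hf0 hx (S ∩ L) hlow
    simp only [hunion] at this
    linarith [(hf.comp_inter L).multilinear_union_le hx S]
  have hsplit := hf.le_add hf0 (S \ L) (S ∩ L)
  rw [sdiff_union_inter] at hsplit
  linarith

end Submodular

theorem sum_mul_add_sum_eq_of_marginals {ι : Type*} [Fintype ι] [DecidableEq ι]
    {α : Finset ι → ℝ} {x : ι → ℝ} (hα1 : ∑ S, α S = 1)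
    (hmarg : ∀ i, ∑ S ∈ univ.filter (fun S => i ∈ S), α S = x i) (c : ℝ) (b : ι → ℝ) :
    ∑ S, α S * (c + ∑ i ∈ S, b i) = c + ∑ i, x i * b i := by
  have hswap : ∑ S, ∑ i ∈ S, α S * b i = ∑ i, ∑ S ∈ univ.filter (fun S => i ∈ S), α S * b i :=
    sum_comm' fun S i => by simp
  simp only [mul_add, sum_add_distrib, ← sum_mul, hα1, one_mul, mul_sum, hswap, ← hmarg]

theorem stmt_13 {n : ℕ} (f : Finset (Fin n) → ℝ) (hf : Submodular f)
    (hnonneg : ∀ S, 0 ≤ f S) (x : Fin n → ℝ) (hx : ∀ i, 0 ≤ x i ∧ x i ≤ 1)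
    (α : Finset (Fin n) → ℝ) (hα : ∀ S, 0 ≤ α S)
    (hα1 : ∑ S : Finset (Fin n), α S = 1)
    (hmarg : ∀ i, ∑ S ∈ Finset.univ.filter (fun S => i ∈ S), α S = x i) :
    ∑ S : Finset (Fin n), α S * f S ≤ 200 * multilinear (fmax f) x := by
  set L := univ.filter fun i => x i ≤ 1 / 2
  set φ : Finset (Fin n) → ℝ := fun R => f (R ∩ L)
  set G := multilinear (fmax f) x
  set M : Fin n → ℝ := fun i => multilinear (fun R => φ (insert i R) - φ R) x
  have hpointwise : ∀ S, f S ≤ 2 * G + 2 * multilinear φ x + ∑ i ∈ S, 2 * M i := fun S => by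
    have := hf.le_two_mul_multilinear_fmax_add hnonneg hx (L := L) (by simp [L])
      (fun i hi => by simp [L] at hi; linarith) S
    rw [← mul_sum]
    linarith
  have hgains : ∑ i, x i * M i ≤ multilinear φ x :=
    (hf.comp_inter L).sum_mul_multilinear_insert_sub_le (fun S => hnonneg _) hx
  have hφG : multilinear φ x ≤ G := multilinear_inter_le_multilinear_fmax hx f L
  have hG : 0 ≤ G := le_trans (multilinear_nonneg hx fun S => hnonneg _) hφG
  calc ∑ S, α S * f S ≤ ∑ S, α S * (2 * G + 2 * multilinear φ x + ∑ i ∈ S, 2 * M i) :=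
        sum_le_sum fun S _ => mul_le_mul_of_nonneg_left (hpointwise S) (hα S)
    _ = 2 * G + 2 * multilinear φ x + ∑ i, x i * (2 * M i) :=
        sum_mul_add_sum_eq_of_marginals hα1 hmarg _ _
    _ ≤ 200 * G := by
        simp only [mul_left_comm (x _) 2, ← mul_sum]
        linarith
end
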